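/- Let χ ∈ W have lowest index m and admissible set D_{m+1}. Then Σ_{n ∈ {m+2, m+4, …}} ‖Â⁻_{n,n}χ_n + Â⁺_{n−2}χ_{n−2}‖²_{L²} = ‖1_{D_{m+1}×ℝ³} Â⁺_m χ_m‖²_{L²}, and this quantity is finite. -/

import Mathlib

open MeasureTheory ENNReal

noncomputable section

/-- Momentum space `ℝ³`. -/
abbrev R3 : Type := EuclideanSpace ℝ (Fin 3)

/-- `pfun k = p_{n+1}(k₁,…,k_n) = e^{n+1} ∏_{i=1}^{n} (|k_i|² + 1)²` for `k : Fin n → ℝ³`. -/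
def pfun {n : ℕ} (k : Fin n → R3) : ℝ :=
  Real.exp (n + 1) * ∏ i, (‖k i‖ ^ 2 + 1) ^ 2

/-- `Eset n = E_{n+1} ⊆ (ℝ³)^{n+1}`:
`exp(p_{n+1}(k₁,…,k_n)/2) < |k_{n+1}| < exp(p_{n+1}(k₁,…,k_n))`. -/
def Eset (n : ℕ) : Set (Fin (n + 1) → R3) :=
  {k | Real.exp (pfun (fun i : Fin n => k i.castSucc) / 2) < ‖k (Fin.last n)‖ ∧
       ‖k (Fin.last n)‖ < Real.exp (pfun (fun i : Fin n => k i.castSucc))}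

/-- The symmetrizer `𝒮` on subsets of `(ℝ³)^n`: all tuples having a permutation in `X`. -/
def symmSet {n : ℕ} (X : Set (Fin n → R3)) : Set (Fin n → R3) :=
  {k | ∃ σ : Equiv.Perm (Fin n), (k ∘ σ) ∈ X}

/-- `extendSet X = X × ℝ³ ⊆ (ℝ³)^{n+1}` for `X ⊆ (ℝ³)^n`. -/
def extendSet {n : ℕ} (X : Set (Fin n → R3)) : Set (Fin (n + 1) → R3) :=
  {k | (fun i : Fin n => k i.castSucc) ∈ X}

/-- `Fset n = F_{n+1}`: `F₁ = ∅`, `F_{n} = 𝒮((F_{n−1}^∁ × ℝ³) ∩ E_n)`. -/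
def Fset : (n : ℕ) → Set (Fin (n + 1) → R3)
  | 0 => ∅
  | n + 1 => symmSet (extendSet (Fset n)ᶜ ∩ Eset (n + 1))

/-- A representative of a vector of the Fock space: component `n` is a function of
`(k₁,…,k_n; p)`, i.e. of `n + 1` points of `ℝ³`. -/
abbrev FockRep : Type := (n : ℕ) → (Fin (n + 1) → R3) → ℂ

/-- Remove the `i`-th entry of a tuple. -/
def removeAt {n : ℕ} (i : Fin (n + 1)) (f : Fin (n + 1) → R3) : Fin n → R3 :=
  fun j => f (i.succAbove j)

/-- `Â⁺_m` : `(Â⁺_m ψ)(k₁,…,k_{m+1};p) = (m+1)^{-1/2} ∑_i |k_i|^{-1/2} ψ(…,k̂_i,…; p + k_i)`. -/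
def Aplus (m : ℕ) (ψ : (Fin (m + 1) → R3) → ℂ) : (Fin (m + 2) → R3) → ℂ :=
  fun x =>
    (Real.sqrt (m + 1) : ℂ)⁻¹ *
      ∑ i : Fin (m + 1),
        (Real.sqrt ‖x i.castSucc‖ : ℂ)⁻¹ *
          ψ (Fin.snoc (removeAt i fun j : Fin (m + 1) => x j.castSucc)
              (x (Fin.last (m + 1)) + x i.castSucc))

/-- `Aminus t = Â⁻_{t+1}` : the full annihilation-type operator. -/
def Aminus (t : ℕ) (ψ : (Fin (t + 2) → R3) → ℂ) : (Fin (t + 1) → R3) → ℂ :=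
  fun x =>
    (Real.sqrt (t + 1) : ℂ)⁻¹ *
      ∑ i : Fin (t + 1),
        ∫ w : R3, (Real.sqrt ‖w‖ : ℂ)⁻¹ *
          ψ (Fin.snoc (Fin.insertNth i w fun j : Fin t => x j.castSucc)
              (x (Fin.last t) - w))

/-- `AminusL t l = Â⁻_{t+1, l}` : the single term of `Â⁻_{t+1}` where the integration
variable is inserted at position `l`. -/
def AminusL (t : ℕ) (l : Fin (t + 1)) (ψ : (Fin (t + 2) → R3) → ℂ) :
    (Fin (t + 1) → R3) → ℂ :=
  fun x =>
    (Real.sqrt (t + 1) : ℂ)⁻¹ *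
      ∫ w : R3, (Real.sqrt ‖w‖ : ℂ)⁻¹ *
        ψ (Fin.snoc (Fin.insertNth l w fun j : Fin t => x j.castSucc)
            (x (Fin.last t) - w))

/-- `Â⁻_m χ_m`, with `Â⁻₀ := 0`. -/
def AminusComp : (m : ℕ) → ((Fin (m + 1) → R3) → ℂ) → (Fin m → R3) → ℂ
  | 0, _ => 0
  | t + 1, ψ => Aminus t ψ

/-- The full (formal) operator `Â` : `(Âψ)_n = Â⁺_{n−1}ψ_{n−1} + Â⁻_{n+1}ψ_{n+1}`,
with `Â⁺_{−1} := 0`. -/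
def Aop (ψ : FockRep) : FockRep := fun n =>
  match n with
  | 0 => Aminus 0 (ψ 1)
  | n + 1 => fun x => Aplus n (ψ n) x + Aminus (n + 1) (ψ (n + 2)) x

/-- `Tset n` is the set whose indicator gives `1_T` on component `n`:
`∅` for `n = 0` and `F_n × ℝ³` for `n ≥ 1`. -/
def Tset : (n : ℕ) → Set (Fin (n + 1) → R3)
  | 0 => ∅
  | n + 1 => extendSet (Fset n)

/-- The operator `1_T`. -/
def oneT (ψ : FockRep) : FockRep := fun n => (Tset n).indicator (ψ n)

/-- The operator `1_{T^∁}`. -/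
def oneTc (ψ : FockRep) : FockRep := fun n => ((Tset n)ᶜ).indicator (ψ n)

/-- The operator `Â⁺`: `(Â⁺ψ)_n = Â⁺_{n−1}ψ_{n−1}`, `(Â⁺ψ)₀ = 0`. -/
def AplusOp (ψ : FockRep) : FockRep := fun n =>
  match n with
  | 0 => 0
  | n + 1 => Aplus n (ψ n)

/-- `‖ψ‖² = ∑_n ‖ψ_n‖²_{L²}` (in `ℝ≥0∞`). -/
def HnormSq (ψ : FockRep) : ℝ≥0∞ := ∑' n, eLpNorm (ψ n) 2 volume ^ 2

/-- Membership in the Hilbert space `H`. -/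
def memH (ψ : FockRep) : Prop := (∀ n, MemLp (ψ n) 2 volume) ∧ HnormSq ψ < ⊤

/-- `‖1_T Â⁺ 1_{T^∁} ψ‖²`. -/
def VnormSq (ψ : FockRep) : ℝ≥0∞ := HnormSq (oneT (AplusOp (oneTc ψ)))

/-- `ψ ∈ U`, i.e. `ψ ∈ H` and `Âψ ∈ H`. -/
def memU (ψ : FockRep) : Prop := memH ψ ∧ memH (Aop ψ)

/-- `ψ ∈ V`, i.e. `ψ ∈ H` and `‖1_T Â⁺ 1_{T^∁} ψ‖ < ∞`. -/
def memV (ψ : FockRep) : Prop := memH ψ ∧ VnormSq ψ < ⊤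

/-- The inner product of `H` (conjugate-linear in the first argument). -/
def Hinner (φ ψ : FockRep) : ℂ := ∑' n, ∫ x, (starRingEnd ℂ) (φ n x) * ψ n x

/-- `‖φ − ψ‖²`. -/
def distSq (φ ψ : FockRep) : ℝ≥0∞ :=
  ∑' n, eLpNorm (fun x => φ n x - ψ n x) 2 volume ^ 2

/-- `χ_{n,j}` for `n = t + 2`: the `j`-th term of the recursion formula defining members
of `W` in terms of `prev = χ_{n−2}`, with vanishing-set `Dset = D_{n−1}`. -/
def chiTerm (t : ℕ) (Dset : Set (Fin (t + 1) → R3)) (prev : (Fin (t + 1) → R3) → ℂ)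
    (j : Fin (t + 1)) : (Fin (t + 3) → R3) → ℂ :=
  fun x =>
    let kk : Fin (t + 2) → R3 := fun i => x i.castSucc
    let p : R3 := x (Fin.last (t + 2))
    let kf : Fin (t + 1) → R3 := fun i => kk i.castSucc
    let kn : R3 := kk (Fin.last (t + 1))
    (((-Real.sqrt (t + 2) * (Eset (t + 1)).indicator (fun _ => (1 : ℝ)) kk *
          Dsetᶜ.indicator (fun _ => (1 : ℝ)) kf) /
        (2 * Real.pi * Real.sqrt (t + 1) * pfun kf * Real.sqrt (‖kn‖ ^ 5)) : ℝ) : ℂ) *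
      ((Real.sqrt ‖kf j‖ : ℂ)⁻¹ * prev (Fin.snoc (removeAt j kf) (p + kf j + kn)))

/-- The full recursion formula `χ_n = ∑_{j=1}^{n−1} χ_{n,j}` for `n = t + 2`. -/
def chiFormula (t : ℕ) (Dset : Set (Fin (t + 1) → R3)) (prev : (Fin (t + 1) → R3) → ℂ) :
    (Fin (t + 3) → R3) → ℂ :=
  fun x => ∑ j : Fin (t + 1), chiTerm t Dset prev j x

/-- `χ ∈ W`, with lowest index `m` and admissible set `D = D_{m+1}`. -/
def IsW (m : ℕ) (D : Set (Fin (m + 1) → R3)) (χ : FockRep) : Prop :=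
  memH χ ∧
  Fset m ⊆ D ∧ symmSet D = D ∧
  (∀ n, (¬ ∃ j : ℕ, n = m + 2 * j) → χ n = 0) ∧
  χ (m + 2) = chiFormula m D (χ m) ∧
  (∀ j : ℕ, χ (m + 2 * j + 4) = chiFormula (m + 2 * j + 2) ∅ (χ (m + 2 * j + 2))) ∧
  MemLp (AminusComp m (χ m)) 2 volume ∧
  MemLp ((extendSet D).indicator (Aplus m (χ m))) 2 volume

/-- Membership in the linear span of `W`. -/
def inSpanW (φ : FockRep) : Prop :=
  ∃ (k : ℕ) (c : Fin k → ℂ) (χs : Fin k → FockRep),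
    (∀ i, ∃ (m : ℕ) (D : Set (Fin (m + 1) → R3)), IsW m D (χs i)) ∧
    ∀ n x, φ n x = ∑ i, c i * χs i n x

/-- The shell `B_R ∖ B_{1/R} ⊆ ℝ³`. -/
def shellSet (R : ℝ) : Set R3 := {k | R⁻¹ ≤ ‖k‖ ∧ ‖k‖ < R}

/-- `(B_R ∖ B_{1/R})^n × ℝ³` as a subset of `(ℝ³)^{n+1}`. -/
def cutSet (R : ℝ) (n : ℕ) : Set (Fin (n + 1) → R3) :=
  {x | ∀ i : Fin n, x i.castSucc ∈ shellSet R}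

/-- The cut-off creation operator `Â^{R+}_m`. -/
def ARplus (R : ℝ) (m : ℕ) (ψ : (Fin (m + 1) → R3) → ℂ) : (Fin (m + 2) → R3) → ℂ :=
  (cutSet R (m + 1)).indicator (Aplus m ψ)

/-- The cut-off annihilation operator `Â^{R−}_{t+1}`. -/
def ARminus (R : ℝ) (t : ℕ) (ψ : (Fin (t + 2) → R3) → ℂ) : (Fin (t + 1) → R3) → ℂ :=
  (cutSet R t).indicator (Aminus t ((cutSet R (t + 1)).indicator ψ))

/-- `p'_{N+1}(i₁,…,i_N) = e^{N+1} ∏_l (i_l² + 1)²`. -/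
def pIdx (N : ℕ) (i : Fin N → ℕ) : ℝ :=
  Real.exp (N + 1) * ∏ l, ((i l : ℝ) ^ 2 + 1) ^ 2

/-- `X_{N,i} × ℝ³`: the product of spherical shells `i_l ≤ |k_l| < i_l + 1`
in the `k`-variables, with `p` free. -/
def Xshell (N : ℕ) (i : Fin N → ℕ) : Set (Fin (N + 1) → R3) :=
  {x | ∀ l : Fin N, (i l : ℝ) ≤ ‖x l.castSucc‖ ∧ ‖x l.castSucc‖ < (i l : ℝ) + 1}

/-
The recursion defining `χ_n` is engineered so that `Â⁻_{n,n}χ_n` undoes `Â⁺χ_{n-2}` outside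
`D_{n-1} × ℝ³`: the last variable `k_n` of `χ_n` only lives on the shell
`exp (p_n / 2) < |k_n| < exp p_n`, and `∫ |k|^{-3}` over that shell equals `4π · p_n / 2`,
which cancels the prefactor `1 / (2π p_n)`. Hence each summand is `‖1_{D_{n-1}×ℝ³} Â⁺χ_{n-2}‖²`,
and it vanishes for `n ≥ m + 4` because there `D_{n-1} = ∅`.
-/

open Real Set Metric

section ShellIntegral

variable {E : Type*} [NormedAddCommGroup E] [NormedSpace ℝ E] [MeasurableSpace E] [BorelSpace E]
  [FiniteDimensional ℝ E] [Nontrivial E]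

theorem integral_indicator_Ioo_inv_norm_pow_finrank (μ : Measure E) [μ.IsAddHaarMeasure]
    {a b : ℝ} (ha : 0 < a) (hab : a ≤ b) :
    ∫ x, (Ioo a b).indicator (fun r => (r ^ Module.finrank ℝ E)⁻¹) ‖x‖ ∂μ
      = Module.finrank ℝ E * μ.real (ball 0 1) * log (b / a) := by
  set d := Module.finrank ℝ E
  rw [integral_fun_norm_addHaar μ, nsmul_eq_mul, smul_eq_mul, mul_assoc]
  have hd : 0 < d := Module.finrank_pos
  have hradial : EqOn (fun y : ℝ => y ^ (d - 1) • (Ioo a b).indicator (fun r => (r ^ d)⁻¹) y)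
      ((Ioo a b).indicator fun y => y⁻¹) (Ioi 0) := by
    intro y hy
    by_cases hyab : y ∈ Ioo a b
    · have hy0 : y ≠ 0 := (mem_Ioi.1 hy).ne'
      simp only [indicator_of_mem hyab, smul_eq_mul]
      rw [← Nat.sub_add_cancel hd, pow_succ, Nat.add_sub_cancel]
      field_simp
    · simp [indicator_of_notMem hyab]
  have hIoo : Ioo a b ⊆ Ioi 0 := Ioo_subset_Ioi_self.trans (Ioi_subset_Ioi ha.le)
  rw [setIntegral_congr_fun measurableSet_Ioi hradial, setIntegral_indicator measurableSet_Ioo,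
    inter_eq_right.2 hIoo, ← integral_Ioc_eq_integral_Ioo, ← intervalIntegral.integral_of_le hab,
    integral_inv (notMem_uIcc_of_lt ha (ha.trans_le hab))]

theorem integral_indicator_Ioo_inv_norm_cube {a b : ℝ} (ha : 0 < a) (hab : a ≤ b) :
    ∫ w : R3, (Ioo a b).indicator (fun r => (r ^ 3)⁻¹) ‖w‖ = 4 * π * log (b / a) := by
  have h := integral_indicator_Ioo_inv_norm_pow_finrank (volume : Measure R3) ha hab
  rw [finrank_euclideanSpace_fin] at h
  rw [h, measureReal_def, EuclideanSpace.volume_ball_fin_three]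
  simp only [ofReal_one, one_pow, one_mul, toReal_ofReal (by positivity : 0 ≤ π * 4 / 3)]
  push_cast
  ring

end ShellIntegral

theorem pfun_pos {n : ℕ} (k : Fin n → R3) : 0 < pfun k := by
  unfold pfun
  positivity

theorem snoc_mem_Eset_iff {n : ℕ} (k : Fin n → R3) (w : R3) :
    (Fin.snoc k w : Fin (n + 1) → R3) ∈ Eset n ↔ ‖w‖ ∈ Ioo (exp (pfun k / 2)) (exp (pfun k)) := by
  simp only [Eset, mem_ofPred_eq, Fin.snoc_castSucc, Fin.snoc_last, mem_Ioo]

theorem integral_indicator_Eset_shell {n : ℕ} (k : Fin n → R3) :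
    ∫ w : R3, (Ioo (exp (pfun k / 2)) (exp (pfun k))).indicator (fun r => (r ^ 3)⁻¹) ‖w‖
      = 2 * π * pfun k := by
  have hp := pfun_pos k
  rw [integral_indicator_Ioo_inv_norm_cube (exp_pos _) (exp_le_exp.2 (by linarith)),
    ← exp_sub, log_exp]
  ring

theorem inv_sqrt_mul_inv_sqrt_pow_five {r : ℝ} (hr : 0 ≤ r) :
    (√r)⁻¹ * (√(r ^ 5))⁻¹ = (r ^ 3)⁻¹ := by
  rw [← mul_inv, ← sqrt_mul hr, show r * r ^ 5 = (r ^ 3) ^ 2 by ring, sqrt_sq (by positivity)]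

theorem chiFormula_snoc_snoc (t : ℕ) (Dset : Set (Fin (t + 1) → R3))
    (prev : (Fin (t + 1) → R3) → ℂ) (x : Fin (t + 2) → R3) (w : R3) :
    chiFormula t Dset prev (Fin.snoc (Fin.snoc (Fin.init x) w) (x (Fin.last _) - w))
      = ((-√(t + 2) * (Eset (t + 1)).indicator 1 (Fin.snoc (Fin.init x) w : Fin (t + 2) → R3)
            * Dsetᶜ.indicator 1 (Fin.init x) / (2 * π * pfun (Fin.init x) * √(‖w‖ ^ 5)) : ℝ) : ℂ)
        * Aplus t prev x := by
  simp only [chiFormula, chiTerm, Aplus, Fin.init_def, Fin.snoc_castSucc, Fin.snoc_last,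
    Finset.mul_sum, Pi.one_def]
  refine Finset.sum_congr rfl fun j _ => ?_
  rw [show x (Fin.last _) - w + x j.castSucc + w = x (Fin.last _) + x j.castSucc by abel]
  push_cast
  ring

theorem inv_sqrt_mul_chiFormula_snoc_snoc (t : ℕ) (Dset : Set (Fin (t + 1) → R3))
    (prev : (Fin (t + 1) → R3) → ℂ) (x : Fin (t + 2) → R3) (w : R3) :
    (√‖w‖ : ℂ)⁻¹ * chiFormula t Dset prev (Fin.snoc (Fin.snoc (Fin.init x) w) (x (Fin.last _) - w))
      = ((-√(t + 2) * Dsetᶜ.indicator 1 (Fin.init x) / (2 * π * pfun (Fin.init x))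
            * (Ioo (exp (pfun (Fin.init x) / 2)) (exp (pfun (Fin.init x)))).indicator
                (fun r => (r ^ 3)⁻¹) ‖w‖ : ℝ) : ℂ)
        * Aplus t prev x := by
  set P := pfun (Fin.init x)
  set d : ℝ := Dsetᶜ.indicator 1 (Fin.init x)
  have hcoef : (√‖w‖)⁻¹ * (-√(t + 2) * (Eset (t + 1)).indicator 1
        (Fin.snoc (Fin.init x) w : Fin (t + 2) → R3) * d / (2 * π * P * √(‖w‖ ^ 5)))
      = -√(t + 2) * d / (2 * π * P) * (Ioo (exp (P / 2)) (exp P)).indicator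
          (fun r => (r ^ 3)⁻¹) ‖w‖ := by
    by_cases hw : ‖w‖ ∈ Ioo (exp (P / 2)) (exp P)
    · rw [indicator_of_mem ((snoc_mem_Eset_iff _ _).2 hw), indicator_of_mem hw, Pi.one_apply,
        ← inv_sqrt_mul_inv_sqrt_pow_five (norm_nonneg w)]
      ring
    · rw [indicator_of_notMem (mt (snoc_mem_Eset_iff _ _).1 hw), indicator_of_notMem hw]
      ring
  rw [chiFormula_snoc_snoc, ← hcoef]
  push_cast
  ring

theorem AminusL_last_chiFormula (t : ℕ) (Dset : Set (Fin (t + 1) → R3))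
    (prev : (Fin (t + 1) → R3) → ℂ) :
    AminusL (t + 1) (Fin.last (t + 1)) (chiFormula t Dset prev)
      = -(extendSet Dset)ᶜ.indicator (Aplus t prev) := by
  funext x
  set P := pfun (Fin.init x)
  set d : ℝ := Dsetᶜ.indicator 1 (Fin.init x)
  have hintegrand (w : R3) :
      (√‖w‖ : ℂ)⁻¹ * chiFormula t Dset prev
          (Fin.snoc (Fin.insertNth (Fin.last (t + 1)) w fun j => x j.castSucc)
            (x (Fin.last (t + 1)) - w))
        = ((-√(t + 2) * d / (2 * π * P)
            * (Ioo (exp (P / 2)) (exp P)).indicator (fun r => (r ^ 3)⁻¹) ‖w‖ : ℝ) : ℂ)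
          * Aplus t prev x := by
    rw [Fin.insertNth_last', show (fun j : Fin (t + 1) => x j.castSucc) = Fin.init x from rfl,
      inv_sqrt_mul_chiFormula_snoc_snoc]
  have hshell :
      ∫ w : R3, (Ioo (exp (P / 2)) (exp P)).indicator (fun r => (r ^ 3)⁻¹) ‖w‖ = 2 * π * P :=
    integral_indicator_Eset_shell _
  have hP : (P : ℂ) ≠ 0 := Complex.ofReal_ne_zero.2 (pfun_pos _).ne'
  have hsqrt : (√((t : ℝ) + 2) : ℂ) ≠ 0 := Complex.ofReal_ne_zero.2 (by positivity)
  have hd : (d : ℂ) * Aplus t prev x = (extendSet Dset)ᶜ.indicator (Aplus t prev) x := by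
    by_cases hx : Fin.init x ∈ Dset
    · have hx' : x ∈ extendSet Dset := hx
      simp [d, hx, hx']
    · have hx' : x ∉ extendSet Dset := hx
      simp [d, hx, hx']
  simp only [AminusL, hintegrand, integral_mul_const, integral_complex_ofReal, integral_const_mul,
    hshell, Pi.neg_apply, ← hd]
  rw [show ((t + 1 : ℕ) : ℝ) + 1 = t + 2 by push_cast; ring]
  push_cast
  field_simp

theorem AminusL_last_chiFormula_add_Aplus (t : ℕ) (Dset : Set (Fin (t + 1) → R3))
    (prev : (Fin (t + 1) → R3) → ℂ) :
    (fun x => AminusL (t + 1) (Fin.last (t + 1)) (chiFormula t Dset prev) x + Aplus t prev x)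
      = (extendSet Dset).indicator (Aplus t prev) := by
  rw [AminusL_last_chiFormula, indicator_compl]
  funext x
  simp

theorem extendSet_empty {n : ℕ} : extendSet (∅ : Set (Fin n → R3)) = ∅ := rfl

/-- For `χ ∈ W` with lowest index `m` and admissible set `D`:
`∑_{n ∈ {m+2, m+4, …}} ‖Â⁻_{n,n}χ_n + Â⁺_{n−2}χ_{n−2}‖²_{L²}
  = ‖1_{D×ℝ³} Â⁺_m χ_m‖²_{L²}`, and this quantity is finite.
(Here `n = m + 2j + 2` for `j : ℕ`.) -/
theorem statement8 (m : ℕ) (D : Set (Fin (m + 1) → R3)) (χ : FockRep)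
    (h : IsW m D χ) :
    (∑' j : ℕ,
        eLpNorm (fun x =>
          AminusL (m + 2 * j + 1) (Fin.last (m + 2 * j + 1)) (χ (m + 2 * j + 2)) x
            + Aplus (m + 2 * j) (χ (m + 2 * j)) x) 2 volume ^ 2)
      = eLpNorm ((extendSet D).indicator (Aplus m (χ m))) 2 volume ^ 2 ∧
    eLpNorm ((extendSet D).indicator (Aplus m (χ m))) 2 volume ^ 2 < ⊤ := by
  obtain ⟨-, -, -, -, hfirst, hnext, -, hmemLp⟩ := h
  have hlater (j : ℕ) (hj : j ≠ 0) :
      eLpNorm (fun x =>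
          AminusL (m + 2 * j + 1) (Fin.last (m + 2 * j + 1)) (χ (m + 2 * j + 2)) x
            + Aplus (m + 2 * j) (χ (m + 2 * j)) x) 2 volume ^ 2 = 0 := by
    obtain ⟨j, rfl⟩ := Nat.exists_eq_succ_of_ne_zero hj
    change eLpNorm (fun x =>
        AminusL (m + 2 * j + 2 + 1) (Fin.last _) (χ (m + 2 * j + 4)) x
          + Aplus (m + 2 * j + 2) (χ (m + 2 * j + 2)) x) 2 volume ^ 2 = 0
    rw [hnext j, AminusL_last_chiFormula_add_Aplus, extendSet_empty, indicator_empty]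
    simp
  refine ⟨?_, pow_lt_top hmemLp.eLpNorm_lt_top⟩
  rw [tsum_eq_single 0 hlater]
  change eLpNorm (fun x =>
      AminusL (m + 1) (Fin.last (m + 1)) (χ (m + 2)) x + Aplus m (χ m) x) 2 volume ^ 2 = _
  rw [hfirst, AminusL_last_chiFormula_add_Aplus]

end
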